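/- Let m ≥ 1, zⱼ = r₀ ωⱼ with ωⱼ = (cos(π(j-1)/m), sin(π(j-1)/m), 0) ∈ ℝ³, r₀ > 0, j = 1, …, 2m, and α = -∑_{k=2}^{2m} (-1)ᵏ/(4π|z_k - z₁|). Define the 2m×2m matrix A by A_{jj} = α, A_{jj'} = -1/(4π|zⱼ - z_{j'}|) for j ≠ j'. Then the vector q with qⱼ = (-1)^{j+1} satisfies A q = 0. -/

import Mathlib

/-!
The vertices lie at angles `π i / m`, so `‖z a - z b‖` depends only on `b - a` modulo `2 m`:
each row of `A` is a cyclic shift of the first, `A j (j + k) = c k`. As `2 m` is even,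
`(-1) ^ (j + k) = (-1) ^ j * (-1) ^ k` in `Fin (2 m)`, hence `(A q) j = (-1) ^ j * ∑ k, c k * (-1) ^ k`,
and `α` is chosen exactly so that this alternating sum of the first row vanishes.
-/

open Real

/-- The point (a, b, c) of Euclidean 3-space. -/
noncomputable def pt3 (a b c : ℝ) : EuclideanSpace ℝ (Fin 3) :=
  (WithLp.equiv 2 (Fin 3 → ℝ)).symm ![a, b, c]

lemma norm_pt3_sub_pt3 (a b c a' b' c' : ℝ) :
    ‖pt3 a b c - pt3 a' b' c'‖ = √((a - a') ^ 2 + (b - b') ^ 2 + (c - c') ^ 2) := by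
  simp [EuclideanSpace.norm_eq, Fin.sum_univ_three, pt3]

lemma norm_pt3_circle_sub (r θ φ : ℝ) :
    ‖pt3 (r * cos θ) (r * sin θ) 0 - pt3 (r * cos φ) (r * sin φ) 0‖ =
      √(2 * r ^ 2 * (1 - cos (θ - φ))) := by
  rw [norm_pt3_sub_pt3, cos_sub]
  congr 1
  linear_combination r ^ 2 * sin_sq_add_cos_sq θ + r ^ 2 * sin_sq_add_cos_sq φ

noncomputable def polygonVertex (r : ℝ) (m i : ℕ) : EuclideanSpace ℝ (Fin 3) :=
  pt3 (r * cos (π * i / m)) (r * sin (π * i / m)) 0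

lemma polygonVertex_mod (r : ℝ) (m i : ℕ) :
    polygonVertex r m (i % (2 * m)) = polygonVertex r m i := by
  rcases eq_or_ne m 0 with rfl | hm
  · rw [mul_zero, Nat.mod_zero]
  have hangle : π * i / m = π * ↑(i % (2 * m)) / m + ↑(i / (2 * m)) * (2 * π) := by
    have hi : ((i % (2 * m) : ℕ) : ℝ) + 2 * m * (i / (2 * m) : ℕ) = i := by
      exact_mod_cast Nat.mod_add_div i (2 * m)
    rw [← hi]
    field_simp
  simp only [polygonVertex, hangle, cos_add_nat_mul_two_pi, sin_add_nat_mul_two_pi]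

lemma norm_polygonVertex_sub_add (r : ℝ) (m a k : ℕ) :
    ‖polygonVertex r m a - polygonVertex r m (a + k)‖ =
      ‖polygonVertex r m k - polygonVertex r m 0‖ := by
  simp only [polygonVertex, norm_pt3_circle_sub, ← cos_neg (π * a / m - _)]
  push_cast
  ring_nf

lemma neg_one_pow_val_add {R : Type*} [Ring R] {n : ℕ} (hn : Even n) (i j : Fin n) :
    (-1 : R) ^ (i + j).val = (-1) ^ i.val * (-1) ^ j.val := by
  rw [Fin.val_add, ← pow_add, neg_one_pow_eq_pow_mod_two,
    Nat.mod_mod_of_dvd _ (even_iff_two_dvd.mp hn), ← neg_one_pow_eq_pow_mod_two]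

lemma mulVec_neg_one_pow_of_apply_add {R : Type*} [CommRing R] {n : ℕ} [NeZero n] (hn : Even n)
    (B : Matrix (Fin n) (Fin n) R) (c : Fin n → R) (hB : ∀ i k, B i (i + k) = c k)
    (i : Fin n) :
    B.mulVec (fun j => (-1) ^ j.val) i = (-1) ^ i.val * ∑ k, c k * (-1) ^ k.val := by
  simp only [Matrix.mulVec, dotProduct]
  rw [← Equiv.sum_comp (Equiv.addLeft i), Finset.mul_sum]
  refine Finset.sum_congr rfl fun k _ => ?_
  rw [Equiv.coe_addLeft, hB, neg_one_pow_val_add hn]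
  ring

lemma sum_Icc_two_neg_one_pow_div_sub_one {K : Type*} [DivisionRing K] (f : ℕ → K) (n : ℕ) :
    ∑ k ∈ Finset.Icc 2 n, (-1) ^ k / f (k - 1) = -∑ k ∈ Finset.Ico 1 n, (-1) ^ k / f k := by
  rw [← Finset.Ico_add_one_right_eq_Icc, Finset.sum_Ico_eq_sum_range, Finset.sum_Ico_eq_sum_range,
    ← Finset.sum_neg_distrib, show n + 1 - 2 = n - 1 by omega]
  refine Finset.sum_congr rfl fun k _ => ?_
  rw [show 2 + k - 1 = 1 + k by omega, pow_add, pow_add]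
  simp [neg_div]

/-- The paper's vertex `z_j` (`j = 1, …, 2m`) is `z (j - 1)`, and its `q_j = (-1)^(j+1)` is
`q (j - 1) = (-1)^(j - 1)`. -/
theorem stmt12_general (m : ℕ) (hm : 1 ≤ m) (r₀ : ℝ)
    (z : ℕ → EuclideanSpace ℝ (Fin 3))
    (hz : ∀ i : ℕ, z i = pt3 (r₀ * cos (π * i / m)) (r₀ * sin (π * i / m)) 0)
    (α : ℝ)
    (hα : α = -∑ k ∈ Finset.Icc 2 (2 * m), ((-1 : ℝ)) ^ k / (4 * π * ‖z (k - 1) - z 0‖))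
    (A : Matrix (Fin (2 * m)) (Fin (2 * m)) ℝ)
    (hA : ∀ j j' : Fin (2 * m),
      A j j' = if j = j' then α else -1 / (4 * π * ‖z j.val - z j'.val‖))
    (q : Fin (2 * m) → ℝ) (hq : ∀ j : Fin (2 * m), q j = (-1 : ℝ) ^ j.val) :
    A.mulVec q = 0 := by
  have : NeZero (2 * m) := ⟨by omega⟩
  have hdist (a k : ℕ) : ‖z a - z ((a + k) % (2 * m))‖ = ‖z k - z 0‖ := by
    obtain rfl : z = polygonVertex r₀ m := funext hz
    rw [polygonVertex_mod, norm_polygonVertex_sub_add]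
  set g : ℕ → ℝ := fun k => if k = 0 then α else -1 / (4 * π * ‖z k - z 0‖) with hg
  have hrow (j k : Fin (2 * m)) : A j (j + k) = g k := by
    simp only [hA, Fin.val_add, hdist, hg, left_eq_add, Fin.val_eq_zero_iff]
  have hsum : ∑ k : Fin (2 * m), g k * (-1) ^ k.val = 0 := by
    rw [sum_Icc_two_neg_one_pow_div_sub_one (fun k => 4 * π * ‖z k - z 0‖), neg_neg] at hα
    have hoff : ∀ k ∈ Finset.Ico 1 (2 * m),
        g k * (-1) ^ k = -((-1) ^ k / (4 * π * ‖z k - z 0‖)) := by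
      intro k hk
      simp only [hg, if_neg (Nat.one_le_iff_ne_zero.mp (Finset.mem_Ico.mp hk).1)]
      ring
    rw [Fin.sum_univ_eq_sum_range (fun k => g k * (-1) ^ k),
      Finset.sum_range_eq_add_Ico _ (by omega), Finset.sum_congr rfl hoff,
      Finset.sum_neg_distrib, ← hα]
    simp [hg]
  obtain rfl : q = fun j => (-1) ^ j.val := funext hq
  funext j
  rw [mulVec_neg_one_pow_of_apply_add (even_two_mul m) A _ hrow, hsum, mul_zero, Pi.zero_apply]

/-- for the regular 2m-gon scatterer with
α = -∑_{k=2}^{2m}(-1)ᵏ/(4π|z_k - z₁|), the alternating charge vector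
q_j = (-1)^{j+1} lies in the kernel of the zero-energy matrix A.
Here the paper's vertex z_j (j = 1,…,2m) is `z (j-1)`, i.e. `z i` has angle πi/m,
and the paper's q_j = (-1)^{j+1} is `q i = (-1)^i` for i = j - 1. -/
theorem stmt12 (m : ℕ) (hm : 1 ≤ m) (r₀ : ℝ) (hr : 0 < r₀)
    (z : ℕ → EuclideanSpace ℝ (Fin 3))
    (hz : ∀ i : ℕ, z i = pt3 (r₀ * cos (π * i / m)) (r₀ * sin (π * i / m)) 0)
    (α : ℝ)
    (hα : α = -∑ k ∈ Finset.Icc 2 (2 * m), ((-1 : ℝ)) ^ k / (4 * π * ‖z (k - 1) - z 0‖))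
    (A : Matrix (Fin (2 * m)) (Fin (2 * m)) ℝ)
    (hA : ∀ j j' : Fin (2 * m),
      A j j' = if j = j' then α else -1 / (4 * π * ‖z j.val - z j'.val‖))
    (q : Fin (2 * m) → ℝ) (hq : ∀ j : Fin (2 * m), q j = (-1 : ℝ) ^ j.val) :
    A.mulVec q = 0 :=
  stmt12_general m hm r₀ z hz α hα A hA q hq
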